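/- Let φ : ℝ → ℝ be differentiable with φ(x) = (deriv φ x) * x for all x (a homogeneous activation). Consider an L-layer fully connected network with biases on ℝ^n: x_0 = x, x_l = φ.(W_l x_{l-1} + b_l) for l = 1, …, L−1, and output y = W_L x_{L-1} + b_L, with W_l ∈ ℝ^{n×n}, b_l ∈ ℝ^n; let R : ℝ^n → ℝ be differentiable. Then for every layer l: ⟨∂(R∘f)/∂W_l, W_l⟩ + Σ_{i=l}^{L} ⟨∂(R∘f)/∂b_i, b_i⟩ = ⟨∇R(y), y⟩, where f denotes the network output as a function of all parameters (W_1, b_1, …, W_L, b_L) at the fixed input x, and ⟨∂(R∘f)/∂W_l, W_l⟩ = Σ_{i,j} (W_l)_{ij}·∂(R∘f)/∂(W_l)_{ij}. -/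

import Mathlib

/-!
Scale the weights of layer `l` and the biases of layers `l, …, L` by `t`. Since
`φ z = φ' z * z`, the derivative at `t = 1` of every layer `m ≥ l` equals its value, so the
output moves with velocity `y` and, by the chain rule, `d/dt R = ⟨∇R(y), y⟩` at `t = 1`.
On the other hand, Euler's identity `∑ θ_c ∂_c G(θ) = d/dt G(tθ)` at `t = 1`, applied to the
loss as a function of the scaled parameters, turns the same derivative into the total
synaptic saliency.
-/

/-- Hidden activations of a fully connected network with biases: `x_0 = x`,
`x_l = φ.(W_l x_{l-1} + b_l)`. -/
noncomputable def actLB (n : ℕ) (φ : ℝ → ℝ) (W : ℕ → Matrix (Fin n) (Fin n) ℝ)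
    (b : ℕ → Fin n → ℝ) (x : Fin n → ℝ) : ℕ → Fin n → ℝ
  | 0 => x
  | l + 1 => fun i => φ ((∑ j, W (l + 1) i j * actLB n φ W b x l j) + b (l + 1) i)

/-- Output of the `L`-layer fully connected network with biases:
`y = W_L x_{L-1} + b_L` (no activation on the output layer). -/
noncomputable def netLB (n L : ℕ) (φ : ℝ → ℝ) (W : ℕ → Matrix (Fin n) (Fin n) ℝ)
    (b : ℕ → Fin n → ℝ) (x : Fin n → ℝ) : Fin n → ℝ :=
  fun i => (∑ j, W L i j * actLB n φ W b x (L - 1) j) + b L i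

theorem sum_smul_deriv_update_eq_deriv_smul {𝕜 ι F : Type*} [NontriviallyNormedField 𝕜]
    [NormedAddCommGroup F] [NormedSpace 𝕜 F] [Fintype ι] [DecidableEq ι]
    {G : (ι → 𝕜) → F} {P : ι → 𝕜} (hG : DifferentiableAt 𝕜 G P) :
    ∑ c, P c • deriv (fun t => G (Function.update P c t)) (P c)
      = deriv (fun t : 𝕜 => G (t • P)) 1 := by
  have hpartial (c : ι) :
      deriv (fun t => G (Function.update P c t)) (P c) = fderiv 𝕜 G P (Pi.single c 1) :=
    (hG.hasFDerivAt.comp_hasDerivAt_of_eq (P c) (hasDerivAt_update P c (P c))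
      (Function.update_eq_self c P).symm).deriv
  have hradial : deriv (fun t : 𝕜 => G (t • P)) 1 = fderiv 𝕜 G P P := by
    simpa [Function.comp_def] using (hG.hasFDerivAt.comp_hasDerivAt_of_eq (1 : 𝕜)
      ((hasDerivAt_id' (1 : 𝕜)).smul_const P) (one_smul 𝕜 P).symm).deriv
  simp_rw [hradial, hpartial, ← map_smul, ← map_sum]
  congr 1
  ext j
  simp [Finset.sum_apply, Pi.single_apply]

section Network

variable {n : ℕ} {φ : ℝ → ℝ}

def preactLB (W : ℕ → Matrix (Fin n) (Fin n) ℝ) (b : ℕ → Fin n → ℝ) (k : ℕ)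
    (a : Fin n → ℝ) : Fin n → ℝ :=
  fun i => ∑ j, W k i j * a j + b k i

variable (W : ℕ → Matrix (Fin n) (Fin n) ℝ) (b : ℕ → Fin n → ℝ) (x : Fin n → ℝ)

theorem actLB_succ (k : ℕ) :
    actLB n φ W b x (k + 1) = fun i => φ (preactLB W b (k + 1) (actLB n φ W b x k) i) :=
  rfl

theorem netLB_eq_preactLB (L : ℕ) :
    netLB n L φ W b x = preactLB W b L (actLB n φ W b x (L - 1)) :=
  rfl

def scaleWeight (l : ℕ) (t : ℝ) : ℕ → Matrix (Fin n) (Fin n) ℝ :=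
  Function.update W l (t • W l)

def scaleBias (l L : ℕ) (t : ℝ) : ℕ → Fin n → ℝ :=
  fun k => if k ∈ Finset.Icc l L then t • b k else b k

variable {W b} {l L : ℕ}

@[simp]
theorem scaleWeight_one : scaleWeight W l 1 = W := by
  simp [scaleWeight]

@[simp]
theorem scaleBias_one : scaleBias b l L 1 = b := by
  funext k
  simp [scaleBias]

theorem actLB_scale_of_lt (t : ℝ) :
    ∀ m < l, actLB n φ (scaleWeight W l t) (scaleBias b l L t) x m = actLB n φ W b x m
  | 0, _ => rfl
  | m + 1, hm => by
    have hW : scaleWeight W l t (m + 1) = W (m + 1) := Function.update_of_ne (by omega) _ _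
    have hb : scaleBias b l L t (m + 1) = b (m + 1) := if_neg (by simp; omega)
    rw [actLB_succ, actLB_succ, actLB_scale_of_lt t m (by omega)]
    simp only [preactLB, hW, hb]

theorem preactLB_scale_self (hlL : l ≤ L) (t : ℝ) (a : Fin n → ℝ) :
    preactLB (scaleWeight W l t) (scaleBias b l L t) l a = t • preactLB W b l a := by
  funext i
  simp [preactLB, scaleWeight, scaleBias, hlL, mul_add, Finset.mul_sum, mul_assoc]

theorem preactLB_scale_of_lt {k : ℕ} (hlk : l < k) (hkL : k ≤ L) (t : ℝ) (a : Fin n → ℝ)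
    (i : Fin n) :
    preactLB (scaleWeight W l t) (scaleBias b l L t) k a i = ∑ j, W k i j * a j + t * b k i := by
  have hW : scaleWeight W l t k = W k := Function.update_of_ne (by omega) _ _
  have hb : scaleBias b l L t k = t • b k := if_pos (by simp; omega)
  simp [preactLB, hW, hb]

theorem hasDerivAt_preactLB_scale_self (hlL : l ≤ L) (a : Fin n → ℝ) (i : Fin n) :
    HasDerivAt (fun t => preactLB (scaleWeight W l t) (scaleBias b l L t) l a i)
      (preactLB W b l a i) 1 := by
  simp only [preactLB_scale_self hlL, Pi.smul_apply, smul_eq_mul]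
  simpa using (hasDerivAt_id' (1 : ℝ)).mul_const (preactLB W b l a i)

theorem hasDerivAt_preactLB_scale_of_lt {k : ℕ} (hlk : l < k) (hkL : k ≤ L)
    {a : ℝ → Fin n → ℝ} {a' : Fin n → ℝ}
    (ha : ∀ j, HasDerivAt (fun t => a t j) (a' j) 1) (i : Fin n) :
    HasDerivAt (fun t => preactLB (scaleWeight W l t) (scaleBias b l L t) k (a t) i)
      (preactLB W b k a' i) 1 := by
  simp only [preactLB_scale_of_lt hlk hkL]
  exact (HasDerivAt.fun_sum fun j _ => (ha j).const_mul (W k i j)).add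
    (by simpa using (hasDerivAt_id' (1 : ℝ)).mul_const (b k i))

theorem hasDerivAt_homogeneous_comp (hφd : Differentiable ℝ φ)
    (hφ : ∀ z : ℝ, φ z = deriv φ z * z) {g : ℝ → ℝ} {z : ℝ} (hg : HasDerivAt g z 1)
    (hg1 : g 1 = z) : HasDerivAt (fun t => φ (g t)) (φ z) 1 := by
  rw [hφ z]
  exact (hφd z).hasDerivAt.comp_of_eq 1 hg hg1.symm

theorem hasDerivAt_actLB_scale (hφd : Differentiable ℝ φ)
    (hφ : ∀ z : ℝ, φ z = deriv φ z * z) (hl : 1 ≤ l) :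
    ∀ m, l ≤ m → m ≤ L → ∀ i, HasDerivAt
      (fun t => actLB n φ (scaleWeight W l t) (scaleBias b l L t) x m i) (actLB n φ W b x m i) 1
  | 0, hlm, _ => by omega
  | m + 1, hlm, hmL => fun i => by
    simp only [actLB_succ]
    refine hasDerivAt_homogeneous_comp hφd hφ ?_ (by simp)
    rcases hlm.eq_or_lt with rfl | hlt
    · simp only [actLB_scale_of_lt x _ m (Nat.lt_succ_self m)]
      exact hasDerivAt_preactLB_scale_self hmL _ i
    · exact hasDerivAt_preactLB_scale_of_lt hlt hmL
        (hasDerivAt_actLB_scale hφd hφ hl m (by omega) (by omega)) i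

theorem hasDerivAt_netLB_scale (hφd : Differentiable ℝ φ)
    (hφ : ∀ z : ℝ, φ z = deriv φ z * z) (hl : 1 ≤ l) (hlL : l ≤ L) :
    HasDerivAt (fun t => netLB n L φ (scaleWeight W l t) (scaleBias b l L t) x)
      (netLB n L φ W b x) 1 := by
  refine hasDerivAt_pi.mpr fun i => ?_
  simp only [netLB_eq_preactLB]
  rcases hlL.eq_or_lt with rfl | hlt
  · simp only [actLB_scale_of_lt x _ _ (Nat.sub_one_lt_of_lt hl)]
    exact hasDerivAt_preactLB_scale_self le_rfl _ i
  · exact hasDerivAt_preactLB_scale_of_lt hlt le_rfl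
      (hasDerivAt_actLB_scale x hφd hφ hl (L - 1) (by omega) (by omega)) i

end Network

section Differentiability

variable {n : ℕ} {φ : ℝ → ℝ} {E : Type*} [NormedAddCommGroup E] [NormedSpace ℝ E]
  {W : E → ℕ → Matrix (Fin n) (Fin n) ℝ} {b : E → ℕ → Fin n → ℝ}

theorem differentiable_actLB (hφd : Differentiable ℝ φ)
    (hW : ∀ k i j, Differentiable ℝ fun p => W p k i j)
    (hb : ∀ k i, Differentiable ℝ fun p => b p k i) (x : Fin n → ℝ) :
    ∀ m i, Differentiable ℝ fun p => actLB n φ (W p) (b p) x m i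
  | 0, _ => differentiable_const _
  | m + 1, i => hφd.comp <| (Differentiable.fun_sum fun j _ =>
      (hW (m + 1) i j).mul (differentiable_actLB hφd hW hb x m j)).add (hb (m + 1) i)

theorem differentiable_netLB (hφd : Differentiable ℝ φ)
    (hW : ∀ k i j, Differentiable ℝ fun p => W p k i j)
    (hb : ∀ k i, Differentiable ℝ fun p => b p k i) (x : Fin n → ℝ) (L : ℕ) :
    Differentiable ℝ fun p => netLB n L φ (W p) (b p) x :=
  differentiable_pi.mpr fun i => (Differentiable.fun_sum fun j _ =>
    (hW L i j).mul (differentiable_actLB hφd hW hb x (L - 1) j)).add (hb L i)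

end Differentiability

section Parameters

variable {n l L : ℕ}

/-- Coordinates of the separating set: the entries of `W l` and of the biases `b k`,
`l ≤ k ≤ L`. -/
abbrev ParamIdx (n l L : ℕ) : Type := (Fin n × Fin n) ⊕ (Finset.Icc l L × Fin n)

def weightOf (W : ℕ → Matrix (Fin n) (Fin n) ℝ) (p : ParamIdx n l L → ℝ) :
    ℕ → Matrix (Fin n) (Fin n) ℝ :=
  Function.update W l (Matrix.of fun i j => p (.inl (i, j)))

def biasOf (b : ℕ → Fin n → ℝ) (p : ParamIdx n l L → ℝ) : ℕ → Fin n → ℝ :=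
  fun k => if h : k ∈ Finset.Icc l L then fun r => p (.inr (⟨k, h⟩, r)) else b k

def toParams (l L : ℕ) (W : ℕ → Matrix (Fin n) (Fin n) ℝ) (b : ℕ → Fin n → ℝ) :
    ParamIdx n l L → ℝ :=
  Sum.elim (fun q => W l q.1 q.2) (fun q => b q.1 q.2)

variable (W : ℕ → Matrix (Fin n) (Fin n) ℝ) (b : ℕ → Fin n → ℝ)

theorem weightOf_smul_toParams (t : ℝ) :
    weightOf W (t • toParams l L W b) = scaleWeight W l t := by
  unfold weightOf scaleWeight
  congr 1

theorem biasOf_smul_toParams (t : ℝ) :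
    biasOf b (t • toParams l L W b) = scaleBias b l L t := by
  funext k
  unfold biasOf scaleBias
  split_ifs <;> rfl

theorem differentiable_weightOf_apply (k : ℕ) (i j : Fin n) :
    Differentiable ℝ fun p : ParamIdx n l L → ℝ => weightOf W p k i j := by
  by_cases hk : k = l
  · subst hk
    simpa [weightOf] using differentiable_apply (𝕜 := ℝ) (Sum.inl (i, j))
  · simp [weightOf, Function.update_of_ne hk]

theorem differentiable_biasOf_apply (k : ℕ) (i : Fin n) :
    Differentiable ℝ fun p : ParamIdx n l L → ℝ => biasOf b p k i := by
  by_cases hk : k ∈ Finset.Icc l L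
  · simpa [biasOf, hk] using
      differentiable_apply (𝕜 := ℝ) (Sum.inr (⟨k, hk⟩, i) : ParamIdx n l L)
  · simp [biasOf, hk]

theorem weightOf_update_inl (i j : Fin n) (t : ℝ) :
    weightOf W (Function.update (toParams l L W b) (.inl (i, j)) t)
      = Function.update W l ((W l).updateRow i (Function.update (W l i) j t)) := by
  unfold weightOf
  congr 1
  ext a c
  by_cases ha : a = i <;> by_cases hc : c = j <;>
    simp [toParams, Function.update_apply, Matrix.updateRow_apply, ha, hc]

theorem biasOf_update_inl (i j : Fin n) (t : ℝ) :
    biasOf b (Function.update (toParams l L W b) (.inl (i, j)) t) = b := by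
  funext k
  unfold biasOf
  split_ifs <;> simp [toParams]

theorem weightOf_update_inr (q : Finset.Icc l L) (r : Fin n) (t : ℝ) :
    weightOf W (Function.update (toParams l L W b) (.inr (q, r)) t) = W := by
  unfold weightOf
  convert Function.update_eq_self l W using 2
  ext i j
  simp [toParams]

theorem biasOf_update_inr (q : Finset.Icc l L) (r : Fin n) (t : ℝ) :
    biasOf b (Function.update (toParams l L W b) (.inr (q, r)) t)
      = Function.update b q (Function.update (b q) r t) := by
  funext k s
  unfold biasOf
  split_ifs with hk
  · by_cases hkq : k = q
    · subst hkq
      by_cases hs : s = r <;> simp [toParams, Function.update_apply, hs]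
    · have hkq' : (⟨k, hk⟩ : Finset.Icc l L) ≠ q := fun h => hkq (congrArg Subtype.val h)
      simp [toParams, hkq, hkq']
  · rw [Function.update_of_ne (fun (h : k = q) => hk (h ▸ q.2))]

theorem sum_toParams_mul_deriv_update
    (F : (ℕ → Matrix (Fin n) (Fin n) ℝ) → (ℕ → Fin n → ℝ) → ℝ) :
    ∑ c, toParams l L W b c *
        deriv (fun t => F (weightOf W (Function.update (toParams l L W b) c t))
          (biasOf b (Function.update (toParams l L W b) c t))) (toParams l L W b c)
      = (∑ i, ∑ j, W l i j *
          deriv (fun t => F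
            (Function.update W l ((W l).updateRow i (Function.update (W l i) j t))) b) (W l i j))
        + ∑ k ∈ Finset.Icc l L, ∑ r, b k r *
          deriv (fun t => F W (Function.update b k (Function.update (b k) r t))) (b k r) := by
  rw [Fintype.sum_sum_type, Fintype.sum_prod_type, ← Finset.sum_coe_sort (Finset.Icc l L),
    Fintype.sum_prod_type]
  simp only [weightOf_update_inl, biasOf_update_inl, weightOf_update_inr, biasOf_update_inr]
  rfl

end Parameters

theorem stmt_3_general (n L : ℕ) (φ : ℝ → ℝ) (hφdiff : Differentiable ℝ φ)
    (hφ : ∀ x : ℝ, φ x = deriv φ x * x)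
    (W : ℕ → Matrix (Fin n) (Fin n) ℝ) (b : ℕ → Fin n → ℝ) (x : Fin n → ℝ)
    (R : (Fin n → ℝ) → ℝ) (hR : Differentiable ℝ R)
    (l : ℕ) (hl1 : 1 ≤ l) (hlL : l ≤ L) :
    (∑ i, ∑ j, W l i j *
        deriv (fun t => R (netLB n L φ
          (Function.update W l ((W l).updateRow i (Function.update (W l i) j t))) b x))
          (W l i j))
      + (∑ i ∈ Finset.Icc l L, ∑ r, b i r *
          deriv (fun t => R (netLB n L φ W
            (Function.update b i (Function.update (b i) r t)) x)) (b i r))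
      = fderiv ℝ R (netLB n L φ W b x) (netLB n L φ W b x) := by
  have hG : Differentiable ℝ fun p : ParamIdx n l L → ℝ =>
      R (netLB n L φ (weightOf W p) (biasOf b p) x) :=
    hR.comp <| differentiable_netLB hφdiff (differentiable_weightOf_apply W)
      (differentiable_biasOf_apply b) x L
  rw [← sum_toParams_mul_deriv_update W b fun W b => R (netLB n L φ W b x)]
  simp_rw [← smul_eq_mul]
  rw [sum_smul_deriv_update_eq_deriv_smul (hG _)]
  simp only [weightOf_smul_toParams, biasOf_smul_toParams]
  exact ((hR _).hasFDerivAt.comp_hasDerivAt_of_eq 1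
    (hasDerivAt_netLB_scale x hφdiff hφ hl1 hlL) (by simp)).deriv

/-- Network-wise conservation of synaptic saliency for a fully
connected network with biases and homogeneous activation: for every layer `l`,
`⟨∂(R∘f)/∂W_l, W_l⟩ + Σ_{i=l}^{L} ⟨∂(R∘f)/∂b_i, b_i⟩ = ⟨∇R(y), y⟩`. -/
theorem stmt_3 (n L : ℕ) (hL : 1 ≤ L) (φ : ℝ → ℝ) (hφdiff : Differentiable ℝ φ)
    (hφ : ∀ x : ℝ, φ x = deriv φ x * x)
    (W : ℕ → Matrix (Fin n) (Fin n) ℝ) (b : ℕ → Fin n → ℝ) (x : Fin n → ℝ)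
    (R : (Fin n → ℝ) → ℝ) (hR : Differentiable ℝ R)
    (l : ℕ) (hl1 : 1 ≤ l) (hlL : l ≤ L) :
    (∑ i, ∑ j, W l i j *
        deriv (fun t => R (netLB n L φ
          (Function.update W l ((W l).updateRow i (Function.update (W l i) j t))) b x))
          (W l i j))
      + (∑ i ∈ Finset.Icc l L, ∑ r, b i r *
          deriv (fun t => R (netLB n L φ W
            (Function.update b i (Function.update (b i) r t)) x)) (b i r))
      = fderiv ℝ R (netLB n L φ W b x) (netLB n L φ W b x) :=
  stmt_3_general n L φ hφdiff hφ W b x R hR l hl1 hlL
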